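/- arXiv:2112.10077 — 2 statements merged into one kernel-verified Lean document; each statement's English description precedes it below -/
import Mathlib

section
/- Let (τ_n)_{n≥1} be complex numbers with ∑_{n=1}^∞ |τ_n| < ∞, and let (γ_n)_{n≥1} be real numbers with 0 ≤ γ_1 < γ_2 < ⋯ and γ_n → ∞. If ∑_{n=1}^∞ τ_n e^{−γ_n t} = 0 for every real t in some nonempty open interval (a,b) with 0 < a < b, then τ_n = 0 for every n. -/
/-!
On the half-plane `0 < re z` every term is bounded by `‖τ n‖`, so the series converges uniformly
there and defines a holomorphic function; vanishing on a real interval, it vanishes on the whole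
half-plane by the identity theorem, in particular at all large real `t`. If `τ m = 0` for `m < n`,
then `e^{γ n t}` times the series tends to `τ n` as `t → ∞` by dominated convergence, so
`τ n = 0` and the coefficients vanish by strong induction.
-/

open Filter Topology Set

noncomputable def dirichletSeries (τ : ℕ → ℂ) (γ : ℕ → ℝ) (z : ℂ) : ℂ :=
  ∑' n, τ n * Complex.exp (-(γ n : ℂ) * z)

theorem norm_cexp_neg_ofReal_mul (γ : ℝ) (z : ℂ) :
    ‖Complex.exp (-(γ : ℂ) * z)‖ = Real.exp (-γ * z.re) := by
  rw [Complex.norm_exp, ← Complex.ofReal_neg, Complex.re_ofReal_mul]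

theorem norm_cexp_neg_ofReal_mul_le_one {γ : ℝ} {z : ℂ} (hγ : 0 ≤ γ) (hz : 0 ≤ z.re) :
    ‖Complex.exp (-(γ : ℂ) * z)‖ ≤ 1 := by
  rw [norm_cexp_neg_ofReal_mul, Real.exp_le_one_iff]
  exact mul_nonpos_of_nonpos_of_nonneg (neg_nonpos.2 hγ) hz

theorem tendsto_cexp_neg_ofReal_mul_atTop {γ : ℝ} (hγ : 0 < γ) :
    Tendsto (fun t : ℝ => Complex.exp (-(γ : ℂ) * t)) atTop (𝓝 0) := by
  rw [tendsto_zero_iff_norm_tendsto_zero]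
  simp only [norm_cexp_neg_ofReal_mul, Complex.ofReal_re]
  exact Real.tendsto_exp_atBot.comp (tendsto_id.const_mul_atTop_of_neg (neg_neg_of_pos hγ))

namespace dirichletSeries

variable {τ : ℕ → ℂ} {γ : ℕ → ℝ}

theorem cexp_mul (c : ℝ) (z : ℂ) :
    Complex.exp (c * z) * dirichletSeries τ γ z = dirichletSeries τ (γ · - c) z := by
  rw [dirichletSeries, dirichletSeries, ← tsum_mul_left]
  congr 1 with m
  rw [mul_left_comm, ← Complex.exp_add]
  push_cast
  ring_nf

theorem differentiableOn (hτ : Summable (‖τ ·‖)) (hγ : ∀ n, 0 ≤ γ n) :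
    DifferentiableOn ℂ (dirichletSeries τ γ) {z | 0 < z.re} := by
  have hbound : ∀ n, ∀ z ∈ {z : ℂ | 0 < z.re}, ‖τ n * Complex.exp (-(γ n : ℂ) * z)‖ ≤ ‖τ n‖ :=
    fun n z hz => by
      simpa [norm_mul] using
        mul_le_mul_of_nonneg_left (norm_cexp_neg_ofReal_mul_le_one (hγ n) (le_of_lt hz))
          (norm_nonneg (τ n))
  refine (tendstoUniformlyOn_tsum hτ hbound).tendstoLocallyUniformlyOn.differentiableOn
    (Eventually.of_forall fun s => ?_) (isOpen_lt continuous_const Complex.continuous_re)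
  exact DifferentiableOn.fun_sum fun n _ =>
    ((differentiable_id.const_mul _).cexp.const_mul (τ n)).differentiableOn

theorem tendsto_atTop (hτ : Summable (‖τ ·‖)) {n : ℕ} (hn : γ n = 0)
    (hγ : ∀ m ≠ n, τ m = 0 ∨ 0 < γ m) :
    Tendsto (fun t : ℝ => dirichletSeries τ γ t) atTop (𝓝 (τ n)) := by
  have hlim : ∀ m, Tendsto (fun t : ℝ => τ m * Complex.exp (-(γ m : ℂ) * t)) atTop
      (𝓝 (if m = n then τ n else 0)) := by
    intro m
    rcases eq_or_ne m n with rfl | hm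
    · simp [hn]
    rcases hγ m hm with hτm | hγm
    · simp [hτm, hm]
    · simpa [hm] using (tendsto_cexp_neg_ofReal_mul_atTop hγm).const_mul (τ m)
  have hbound : ∀ᶠ t : ℝ in atTop, ∀ m, ‖τ m * Complex.exp (-(γ m : ℂ) * t)‖ ≤ ‖τ m‖ := by
    filter_upwards [eventually_ge_atTop 0] with t ht m
    have hγm : τ m = 0 ∨ 0 ≤ γ m := by
      rcases eq_or_ne m n with rfl | hm
      · exact .inr hn.ge
      · exact (hγ m hm).imp_right le_of_lt
    rcases hγm with hτm | hγm
    · simp [hτm]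
    · rw [norm_mul]
      exact mul_le_of_le_one_right (norm_nonneg _)
        (norm_cexp_neg_ofReal_mul_le_one hγm (by simpa using ht))
  simpa [dirichletSeries] using tendsto_tsum_of_dominated_convergence hτ hlim hbound

theorem coeff_eq_zero_of_eventually_eq_zero (hτ : Summable (‖τ ·‖)) (hγ : StrictMono γ)
    (hF : ∀ᶠ t : ℝ in atTop, dirichletSeries τ γ t = 0) (n : ℕ) : τ n = 0 := by
  induction n using Nat.strong_induction_on with
  | _ n ih =>
    have hshift : Tendsto (fun t : ℝ => Complex.exp (γ n * t) * dirichletSeries τ γ t) atTop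
        (𝓝 (τ n)) := by
      simp only [cexp_mul]
      refine tendsto_atTop hτ (sub_self _) fun m hm => ?_
      rcases hm.lt_or_gt with hlt | hgt
      · exact .inl (ih m hlt)
      · exact .inr (sub_pos.2 (hγ hgt))
    have hzero : Tendsto (fun t : ℝ => Complex.exp (γ n * t) * dirichletSeries τ γ t) atTop
        (𝓝 0) :=
      tendsto_const_nhds.congr' (hF.mono fun t ht => by simp only [ht, mul_zero])
    exact tendsto_nhds_unique hshift hzero

end dirichletSeries

theorem AnalyticOnNhd.eqOn_zero_of_preconnected_of_eq_zero_on_Ioo {f : ℂ → ℂ} {U : Set ℂ}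
    (hf : AnalyticOnNhd ℂ f U) (hU : IsPreconnected U) {a b : ℝ} (hab : a < b)
    (hsub : ∀ x ∈ Ioo a b, (x : ℂ) ∈ U) (h0 : ∀ x ∈ Ioo a b, f x = 0) : EqOn f 0 U := by
  obtain ⟨c, hc⟩ := nonempty_Ioo.2 hab
  have hofReal : Tendsto ((↑) : ℝ → ℂ) (𝓝[≠] c) (𝓝[≠] (c : ℂ)) :=
    Complex.continuous_ofReal.continuousWithinAt.tendsto_nhdsWithin
      fun x hx => Complex.ofReal_injective.ne hx
  have hfreq : ∃ᶠ x : ℝ in 𝓝[≠] c, f x = 0 :=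
    (eventually_nhdsWithin_of_eventually_nhds (Ioo_mem_nhds hc.1 hc.2)).frequently.mono h0
  exact hf.eqOn_zero_of_preconnected_of_frequently_eq_zero hU (hsub c hc) (hofReal.frequently hfreq)

theorem dirichlet_series_vanishing_on_interval_implies_trivial_general
    (τ : ℕ → ℂ) (hτ : Summable fun n => ‖τ n‖)
    (γ : ℕ → ℝ) (hγ0 : 0 ≤ γ 0) (hγ_mono : StrictMono γ)
    (a b : ℝ) (ha : 0 < a) (hab : a < b)
    (hvanish : ∀ x ∈ Set.Ioo a b,
      ∑' n, τ n * Complex.exp (-(γ n : ℂ) * (x : ℂ)) = 0) :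
    ∀ n, τ n = 0 := by
  have hγ : ∀ n, 0 ≤ γ n := fun n => hγ0.trans (hγ_mono.monotone n.zero_le)
  have hopen : IsOpen {z : ℂ | 0 < z.re} := isOpen_lt continuous_const Complex.continuous_re
  have hzero : EqOn (dirichletSeries τ γ) 0 {z | 0 < z.re} :=
    ((dirichletSeries.differentiableOn hτ hγ).analyticOnNhd hopen
      ).eqOn_zero_of_preconnected_of_eq_zero_on_Ioo (convex_halfSpace_re_gt 0).isPreconnected
      hab (fun x hx => show 0 < x by linarith [hx.1]) hvanish
  exact dirichletSeries.coeff_eq_zero_of_eventually_eq_zero hτ hγ_mono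
    ((eventually_gt_atTop 0).mono fun t ht => hzero (by simpa using ht))

/-- If an absolutely convergent generalized Dirichlet series `∑ τ n e^{-γ n t}` with
strictly increasing nonnegative exponents tending to `∞` vanishes for all real `t` in a
nonempty open interval `(a, b)` with `0 < a < b`, then all coefficients vanish. -/
theorem dirichlet_series_vanishing_on_interval_implies_trivial
    (τ : ℕ → ℂ) (hτ : Summable fun n => ‖τ n‖)
    (γ : ℕ → ℝ) (hγ0 : 0 ≤ γ 0) (hγ_mono : StrictMono γ)
    (hγ_tendsto : Tendsto γ atTop atTop)
    (a b : ℝ) (ha : 0 < a) (hab : a < b)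
    (hvanish : ∀ x ∈ Set.Ioo a b,
      ∑' n, τ n * Complex.exp (-(γ n : ℂ) * (x : ℂ)) = 0) :
    ∀ n, τ n = 0 :=
  dirichlet_series_vanishing_on_interval_implies_trivial_general τ hτ γ hγ0 hγ_mono a b ha hab
    hvanish
end

section
/- Let 0 ≤ t_0 < t_1 < t_2 < ⋯ be a strictly increasing sequence of real numbers, let (b_n)_{n≥1} be positive reals, and let (a_{k,n})_{k,n≥1} and (ã_{k,n})_{k,n≥1} be complex numbers with ∑_{k=1}^∞ ∑_{n=1}^∞ |a_{k,n}| < ∞ and ∑_{k=1}^∞ ∑_{n=1}^∞ |ã_{k,n}| < ∞. For Re s > 0 set P_k(s) = ∑_{n=1}^∞ a_{k,n} · b_n/(s + b_n) and P̃_k(s) = ∑_{n=1}^∞ ã_{k,n} · b_n/(s + b_n). If ∑_{k=1}^∞ (e^{−t_{k−1}s} − e^{−t_k s}) P_k(s) = ∑_{k=1}^∞ (e^{−t_{k−1}s} − e^{−t_k s}) P̃_k(s) for every s with Re s > 0, then for every ε with 0 < ε < t_1 − t_0 one has lim_{s→∞, s real} e^{εs} (P_1(s) − P̃_1(s)) =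 0. -/
/-!
Fix a real `s > 0` and put `D k = P k s - P̃ k s`, `w k = e^{-t_k s} - e^{-t_{k+1} s}`. The data
identity says `∑ w k * D k = 0`, so `w 0 * D 0` equals minus the tail, and the tail is at most
`e^{-t_1 s} * C` with `C` independent of `s`, because `0 ≤ w k ≤ e^{-t_k s}` and `|D k|` is
bounded by the absolutely summable `∑ n, |a k n| + |ã k n|`. Since
`w 0 = e^{-t_0 s} (1 - e^{-(t_1 - t_0) s})`, this gives `|D 0| ≲ e^{-(t_1 - t_0) s}`, which beats
`e^{ε s}` for `ε < t_1 - t_0`.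
-/

open Filter Topology

/-- The series `P_k(s)` of the paper, for the coefficient row `c = a k`. -/
noncomputable def resolventSum (b : ℕ → ℝ) (c : ℕ → ℂ) (s : ℂ) : ℂ :=
  ∑' n, c n * ((b n : ℂ) / (s + (b n : ℂ)))

lemma norm_ofReal_div_add_le_one {b s : ℝ} (hb : 0 < b) (hs : 0 ≤ s) :
    ‖(b : ℂ) / ((s : ℂ) + (b : ℂ))‖ ≤ 1 := by
  rw [← Complex.ofReal_add, ← Complex.ofReal_div, Complex.norm_real,
    Real.norm_of_nonneg (by positivity), div_le_one (by positivity)]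
  linarith

lemma norm_resolventSum_le {b : ℕ → ℝ} (hb : ∀ n, 0 < b n) {c : ℕ → ℂ}
    (hc : Summable fun n => ‖c n‖) {s : ℝ} (hs : 0 ≤ s) :
    ‖resolventSum b c s‖ ≤ ∑' n, ‖c n‖ :=
  tsum_of_norm_bounded hc.hasSum fun n => by
    rw [norm_mul]
    exact mul_le_of_le_one_right (norm_nonneg _) (norm_ofReal_div_add_le_one (hb n) hs)

noncomputable def timeSliceWeight (t : ℕ → ℝ) (s : ℝ) (k : ℕ) : ℝ :=
  Real.exp (-t k * s) - Real.exp (-t (k + 1) * s)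

section timeSliceWeight

variable {t : ℕ → ℝ} {s : ℝ}

lemma ofReal_timeSliceWeight (k : ℕ) :
    (timeSliceWeight t s k : ℂ) =
      Complex.exp (-(t k : ℂ) * s) - Complex.exp (-(t (k + 1) : ℂ) * s) := by
  simp [timeSliceWeight, Complex.ofReal_exp]

lemma timeSliceWeight_nonneg (ht : Monotone t) (hs : 0 ≤ s) (k : ℕ) :
    0 ≤ timeSliceWeight t s k := by
  have : t k * s ≤ t (k + 1) * s := mul_le_mul_of_nonneg_right (ht k.le_succ) hs
  exact sub_nonneg.2 (Real.exp_le_exp.2 (by linarith))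

lemma timeSliceWeight_le_exp (ht : Monotone t) (hs : 0 ≤ s) {j k : ℕ} (hjk : j ≤ k) :
    timeSliceWeight t s k ≤ Real.exp (-t j * s) := by
  have : t j * s ≤ t k * s := mul_le_mul_of_nonneg_right (ht hjk) hs
  exact (sub_le_self _ (Real.exp_pos _).le).trans (Real.exp_le_exp.2 (by linarith))

lemma norm_timeSliceWeight_mul_le (ht : Monotone t) (hs : 0 ≤ s) {j k : ℕ} (hjk : j ≤ k)
    {z : ℂ} {B : ℝ} (hz : ‖z‖ ≤ B) :
    ‖(timeSliceWeight t s k : ℂ) * z‖ ≤ Real.exp (-t j * s) * B := by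
  rw [norm_mul, Complex.norm_real, Real.norm_of_nonneg (timeSliceWeight_nonneg ht hs k)]
  exact mul_le_mul (timeSliceWeight_le_exp ht hs hjk) hz (norm_nonneg z) (Real.exp_pos _).le

lemma summable_timeSliceWeight_mul (ht : Monotone t) (hs : 0 ≤ s) {D : ℕ → ℂ} {B : ℕ → ℝ}
    (hB : Summable B) (hDB : ∀ k, ‖D k‖ ≤ B k) :
    Summable fun k => (timeSliceWeight t s k : ℂ) * D k :=
  (hB.mul_left _).of_norm_bounded fun k =>
    norm_timeSliceWeight_mul_le ht hs (Nat.zero_le k) (hDB k)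

lemma norm_zero_le_of_hasSum_zero {E : Type*} [SeminormedAddCommGroup E] {f : ℕ → E}
    {g : ℕ → ℝ} {c : ℝ} (hf : HasSum f 0) (hg : HasSum g c) (hfg : ∀ k, ‖f (k + 1)‖ ≤ g k) :
    ‖f 0‖ ≤ c := by
  have htail : HasSum (fun k => f (k + 1)) (-f 0) := by
    simpa using (hasSum_nat_add_iff' 1).2 hf
  simpa using htail.norm_le_of_bounded hg hfg

lemma norm_first_slice_le (ht : StrictMono t) (hs : 0 ≤ s) {D : ℕ → ℂ} {B : ℕ → ℝ}
    (hB : Summable B) (hDB : ∀ k, ‖D k‖ ≤ B k)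
    (hsum : HasSum (fun k => (timeSliceWeight t s k : ℂ) * D k) 0) :
    (1 - Real.exp (-((t 1 - t 0) * s))) * ‖D 0‖ ≤
      (∑' k, B (k + 1)) * Real.exp (-((t 1 - t 0) * s)) := by
  have hB1 := ((summable_nat_add_iff 1).2 hB).hasSum.mul_left (Real.exp (-t 1 * s))
  have hfirst := norm_zero_le_of_hasSum_zero hsum hB1 fun k =>
    norm_timeSliceWeight_mul_le ht.monotone hs (Nat.le_add_left 1 k) (hDB (k + 1))
  rw [norm_mul, Complex.norm_real, Real.norm_of_nonneg (timeSliceWeight_nonneg ht.monotone hs 0)]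
    at hfirst
  have hexp : Real.exp (-t 0 * s) * Real.exp (-((t 1 - t 0) * s)) = Real.exp (-t 1 * s) := by
    rw [← Real.exp_add]; ring_nf
  refine le_of_mul_le_mul_left ?_ (Real.exp_pos (-t 0 * s))
  calc Real.exp (-t 0 * s) * ((1 - Real.exp (-((t 1 - t 0) * s))) * ‖D 0‖)
      = timeSliceWeight t s 0 * ‖D 0‖ := by
        rw [timeSliceWeight, ← hexp]; ring
    _ ≤ Real.exp (-t 1 * s) * ∑' k, B (k + 1) := hfirst
    _ = _ := by rw [← hexp]; ring

end timeSliceWeight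

lemma tendsto_cexp_mul_of_le {δ ε C : ℝ} (hδ : 0 < δ) (hε : ε < δ) {F : ℝ → ℂ}
    (hF : ∀ᶠ s in atTop, (1 - Real.exp (-(δ * s))) * ‖F s‖ ≤ C * Real.exp (-(δ * s))) :
    Tendsto (fun s : ℝ => Complex.exp ((ε : ℂ) * (s : ℂ)) * F s) atTop (𝓝 0) := by
  refine squeeze_zero_norm' (a := fun s =>
    C * Real.exp ((ε - δ) * s) / (1 - Real.exp (-(δ * s)))) ?_ ?_
  · filter_upwards [hF, eventually_gt_atTop 0] with s hFs hs
    have hden : 0 < 1 - Real.exp (-(δ * s)) :=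
      sub_pos.2 (Real.exp_lt_one_iff.2 (by nlinarith))
    rw [norm_mul, Complex.norm_exp, le_div_iff₀ hden]
    calc Real.exp ((ε * s : ℂ).re) * ‖F s‖ * (1 - Real.exp (-(δ * s)))
        = Real.exp (ε * s) * ((1 - Real.exp (-(δ * s))) * ‖F s‖) := by
          norm_cast; ring
      _ ≤ Real.exp (ε * s) * (C * Real.exp (-(δ * s))) :=
          mul_le_mul_of_nonneg_left hFs (Real.exp_pos _).le
      _ = C * Real.exp ((ε - δ) * s) := by
          rw [mul_left_comm, ← Real.exp_add]; ring_nf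
  · have hexp : ∀ {r : ℝ}, r < 0 → Tendsto (fun s : ℝ => Real.exp (r * s)) atTop (𝓝 0) :=
      fun hr => Real.tendsto_exp_atBot.comp (tendsto_id.const_mul_atTop_of_neg hr)
    have hδs : Tendsto (fun s : ℝ => Real.exp (-(δ * s))) atTop (𝓝 0) := by
      simpa only [neg_mul] using hexp (neg_neg_of_pos hδ)
    have hlim := ((hexp (sub_neg.2 hε)).const_mul C).div (hδs.const_sub 1) (by norm_num)
    rwa [mul_zero, sub_zero, zero_div] at hlim

theorem first_time_slice_extraction_general
    (t : ℕ → ℝ) (ht : StrictMono t)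
    (b : ℕ → ℝ) (hb_pos : ∀ n, 0 < b n)
    (a a' : ℕ → ℕ → ℂ)
    (ha_inner : ∀ k, Summable fun n => ‖a k n‖)
    (ha_outer : Summable fun k => ∑' n, ‖a k n‖)
    (ha'_inner : ∀ k, Summable fun n => ‖a' k n‖)
    (ha'_outer : Summable fun k => ∑' n, ‖a' k n‖)
    (heq : ∀ s : ℂ, 0 < s.re →
      ∑' k, (Complex.exp (-(t k : ℂ) * s) - Complex.exp (-(t (k + 1) : ℂ) * s)) *
          ∑' n, a k n * ((b n : ℂ) / (s + (b n : ℂ)))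
        = ∑' k, (Complex.exp (-(t k : ℂ) * s) - Complex.exp (-(t (k + 1) : ℂ) * s)) *
            ∑' n, a' k n * ((b n : ℂ) / (s + (b n : ℂ))))
    (ε : ℝ) (hε : ε < t 1 - t 0) :
    Tendsto (fun s : ℝ =>
        Complex.exp ((ε : ℂ) * (s : ℂ)) *
          ((∑' n, a 0 n * ((b n : ℂ) / ((s : ℂ) + (b n : ℂ)))) -
            ∑' n, a' 0 n * ((b n : ℂ) / ((s : ℂ) + (b n : ℂ)))))
      atTop (𝓝 0) := by
  set A : ℕ → ℝ := fun k => (∑' n, ‖a k n‖) + ∑' n, ‖a' k n‖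
  refine tendsto_cexp_mul_of_le (C := ∑' k, A (k + 1)) (sub_pos.2 (ht zero_lt_one)) hε ?_
  filter_upwards [eventually_gt_atTop 0] with s hs
  have hP : ∀ k, ‖resolventSum b (a k) s‖ ≤ ∑' n, ‖a k n‖ := fun k =>
    norm_resolventSum_le hb_pos (ha_inner k) hs.le
  have hP' : ∀ k, ‖resolventSum b (a' k) s‖ ≤ ∑' n, ‖a' k n‖ := fun k =>
    norm_resolventSum_le hb_pos (ha'_inner k) hs.le
  have hdiff : ∀ k, ‖resolventSum b (a k) s - resolventSum b (a' k) s‖ ≤ A k := fun k =>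
    norm_sub_le_of_le (hP k) (hP' k)
  refine norm_first_slice_le ht hs.le (ha_outer.add ha'_outer) hdiff ?_
  have heqs : ∑' k, (timeSliceWeight t s k : ℂ) * resolventSum b (a k) s =
      ∑' k, (timeSliceWeight t s k : ℂ) * resolventSum b (a' k) s := by
    simp only [ofReal_timeSliceWeight, resolventSum]
    exact heq s (by simpa using hs)
  have hsum := (summable_timeSliceWeight_mul ht.monotone hs.le ha_outer hP).hasSum.sub
    (summable_timeSliceWeight_mul ht.monotone hs.le ha'_outer hP').hasSum
  simpa only [← mul_sub, heqs, sub_self] using hsum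

/-- The key extraction step in the proof of Theorem 1.1(i): if the two Laplace-transformed
data series agree on the open right half-plane, then for every `0 < ε < t 1 - t 0`,
`e^{εs} (P 0 s - P̃ 0 s) → 0` as the real variable `s → ∞`, where
`P k s = ∑' n, a k n * (b n / (s + b n))` and similarly for `P̃`. -/
theorem first_time_slice_extraction
    (t : ℕ → ℝ) (ht0 : 0 ≤ t 0) (ht : StrictMono t)
    (b : ℕ → ℝ) (hb_pos : ∀ n, 0 < b n)
    (a a' : ℕ → ℕ → ℂ)
    (ha_inner : ∀ k, Summable fun n => ‖a k n‖)
    (ha_outer : Summable fun k => ∑' n, ‖a k n‖)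
    (ha'_inner : ∀ k, Summable fun n => ‖a' k n‖)
    (ha'_outer : Summable fun k => ∑' n, ‖a' k n‖)
    (heq : ∀ s : ℂ, 0 < s.re →
      ∑' k, (Complex.exp (-(t k : ℂ) * s) - Complex.exp (-(t (k + 1) : ℂ) * s)) *
          ∑' n, a k n * ((b n : ℂ) / (s + (b n : ℂ)))
        = ∑' k, (Complex.exp (-(t k : ℂ) * s) - Complex.exp (-(t (k + 1) : ℂ) * s)) *
            ∑' n, a' k n * ((b n : ℂ) / (s + (b n : ℂ))))
    (ε : ℝ) (hε0 : 0 < ε) (hε : ε < t 1 - t 0) :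
    Tendsto (fun s : ℝ =>
        Complex.exp ((ε : ℂ) * (s : ℂ)) *
          ((∑' n, a 0 n * ((b n : ℂ) / ((s : ℂ) + (b n : ℂ)))) -
            ∑' n, a' 0 n * ((b n : ℂ) / ((s : ℂ) + (b n : ℂ)))))
      atTop (𝓝 0) :=
  first_time_slice_extraction_general t ht b hb_pos a a' ha_inner ha_outer ha'_inner ha'_outer heq ε
    hε
end
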